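/- Let σ : ℝ^d → ℝ^{d×m} and b : ℝ^d → ℝ^d be measurable with ‖σ(z)‖ ≤ M and |b(z)| ≤ M for all z ∈ ℝ^d. Fix T > 0, x ∈ ℝ^d, n ∈ ℕ, and g : [0,T] → ℝ^m measurable with ∫₀^T |g(s)|² ds ≤ e. Let φ_n(t) = k·2^{−n} for t ∈ [k·2^{−n}, (k+1)·2^{−n}), and let X^n : [0,T] → ℝ^d be continuous with X^n(t) = x + ∫₀^t (σ(X^n(φ_n(s)))·g(s) + b(X^n(φ_n(s)))) ds for all t ∈ [0,T]. Then for every t ∈ [0,T], |X^n(t) − X^n(φ_n(t))| ≤ 2^{−n/2}·M·(√e + 1). -/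

import Mathlib

/-!
Between `φₙ(t)` and `t` the scheme integrates a drift of norm at most `M‖g‖ + M` over an
interval of length at most `2⁻ⁿ`. Cauchy–Schwarz bounds the `‖g‖` part by `2^{-n/2} √e₀`, and
the constant part contributes at most `2⁻ⁿ M ≤ 2^{-n/2} M`. Since the drift sees `Xⁿ` only
through the grid values `Xⁿ(k 2⁻ⁿ)`, it is measurable whatever `σ`, `b` and `Xⁿ` are.
-/

/-- Matrix–vector multiplication, with Euclidean norms on the vector spaces. -/
noncomputable def mulVecE {d m : ℕ} (A : Matrix (Fin d) (Fin m) ℝ)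
    (v : EuclideanSpace ℝ (Fin m)) : EuclideanSpace ℝ (Fin d) :=
  WithLp.toLp 2 (fun i => ∑ j, A i j * v j)

/-- The Hilbert–Schmidt (Frobenius) norm of a real `d × m` matrix. -/
noncomputable def frobNorm {d m : ℕ} (A : Matrix (Fin d) (Fin m) ℝ) : ℝ :=
  Real.sqrt (∑ i, ∑ j, (A i j) ^ 2)

/-- The dyadic discretisation `φₙ(t) = k·2⁻ⁿ` for `t ∈ [k·2⁻ⁿ, (k+1)·2⁻ⁿ)`. -/
noncomputable def phiN (n : ℕ) (t : ℝ) : ℝ := (⌊t * 2 ^ n⌋ : ℝ) / 2 ^ n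

open MeasureTheory Set

theorem norm_mulVecE_le {d m : ℕ} (A : Matrix (Fin d) (Fin m) ℝ)
    (v : EuclideanSpace ℝ (Fin m)) : ‖mulVecE A v‖ ≤ frobNorm A * ‖v‖ := by
  rw [EuclideanSpace.norm_eq, EuclideanSpace.norm_eq, frobNorm, ← Real.sqrt_mul (by positivity),
    Finset.sum_mul]
  refine Real.sqrt_le_sqrt (Finset.sum_le_sum fun i _ => ?_)
  simpa [mulVecE, Real.norm_eq_abs, sq_abs] using Finset.sum_mul_sq_le_sq_mul_sq _ (A i) (v ·)

theorem Measurable.mulVecE {α : Type*} [MeasurableSpace α] {d m : ℕ}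
    {A : α → Matrix (Fin d) (Fin m) ℝ} {v : α → EuclideanSpace ℝ (Fin m)}
    (hA : Measurable fun s i j => A s i j) (hv : Measurable v) :
    Measurable fun s => mulVecE (A s) (v s) := by
  unfold _root_.mulVecE
  fun_prop

section phiN

variable (n : ℕ)

theorem phiN_le (t : ℝ) : phiN n t ≤ t := by
  rw [phiN, div_le_iff₀ (by positivity)]
  exact Int.floor_le _

theorem phiN_nonneg {t : ℝ} (ht : 0 ≤ t) : 0 ≤ phiN n t :=
  div_nonneg (by exact_mod_cast Int.floor_nonneg.2 (by positivity)) (by positivity)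

theorem sub_phiN_le (t : ℝ) : t - phiN n t ≤ ((2 : ℝ) ^ n)⁻¹ := by
  have h : t ≤ (⌊t * 2 ^ n⌋ + 1 : ℝ) / 2 ^ n :=
    (le_div_iff₀ (by positivity)).2 (Int.lt_floor_add_one (t * 2 ^ n)).le
  rw [phiN]
  linarith [add_div (⌊t * 2 ^ n⌋ : ℝ) 1 (2 ^ n), one_div ((2 : ℝ) ^ n)]

theorem two_rpow_neg_half : (2 : ℝ) ^ (-(n : ℝ) / 2) = √((2 ^ n)⁻¹) := by
  rw [Real.sqrt_eq_rpow, ← Real.rpow_natCast, ← Real.rpow_neg (by norm_num),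
    ← Real.rpow_mul (by norm_num)]
  ring_nf

theorem sqrt_sub_phiN_le (t : ℝ) : √(t - phiN n t) ≤ (2 : ℝ) ^ (-(n : ℝ) / 2) :=
  two_rpow_neg_half n ▸ Real.sqrt_le_sqrt (sub_phiN_le n t)

theorem sub_phiN_le_two_rpow (t : ℝ) : t - phiN n t ≤ (2 : ℝ) ^ (-(n : ℝ) / 2) := by
  have h0 : (0 : ℝ) ≤ ((2 : ℝ) ^ n)⁻¹ := by positivity
  have h1 : ((2 : ℝ) ^ n)⁻¹ ≤ 1 := inv_le_one_of_one_le₀ (one_le_pow₀ one_le_two)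
  rw [two_rpow_neg_half]
  exact (sub_phiN_le n t).trans (Real.le_sqrt_of_sq_le (by nlinarith))

theorem measurable_comp_phiN {β : Type*} [MeasurableSpace β] (F : ℝ → β) :
    Measurable fun t => F (phiN n t) :=
  (measurable_from_top (f := fun k : ℤ => F (k / 2 ^ n))).comp
    (Int.measurable_floor.comp (measurable_id.mul_const _))

end phiN

section Integrals

variable {E F : Type*} [NormedAddCommGroup E] [NormedAddCommGroup F]
  {g : ℝ → F} {a b : ℝ}

theorem memLp_two_restrict_Ioc (hg : AEStronglyMeasurable g volume)
    (hg2 : IntegrableOn (fun s => ‖g s‖ ^ 2) (Ioc a b)) : MemLp g 2 (volume.restrict (Ioc a b)) :=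
  (memLp_two_iff_integrable_sq_norm hg.restrict).2 hg2

theorem IntervalIntegrable.norm_of_sq (hg : AEStronglyMeasurable g volume)
    (hg2 : IntervalIntegrable (fun s => ‖g s‖ ^ 2) volume a b) :
    IntervalIntegrable (fun s => ‖g s‖) volume a b :=
  ⟨((memLp_two_restrict_Ioc hg hg2.1).integrable one_le_two).norm,
    ((memLp_two_restrict_Ioc hg hg2.2).integrable one_le_two).norm⟩

theorem intervalIntegral_norm_le_sqrt_mul_sqrt (hab : a ≤ b)
    (hg : AEStronglyMeasurable g volume)
    (hg2 : IntervalIntegrable (fun s => ‖g s‖ ^ 2) volume a b) :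
    ∫ s in a..b, ‖g s‖ ≤ √(b - a) * √(∫ s in a..b, ‖g s‖ ^ 2) := by
  have h := integral_mul_norm_le_Lp_mul_Lq Real.HolderConjugate.two_two
    (by simpa using (memLp_two_restrict_Ioc hg hg2.1).norm)
    (memLp_const (μ := volume.restrict (Ioc a b)) (1 : ℝ))
  simp only [norm_norm, norm_one, mul_one, one_pow, Real.rpow_two, integral_const, smul_eq_mul,
    measureReal_restrict_apply_univ, Real.volume_real_Ioc_of_le hab] at h
  rw [intervalIntegral.integral_of_le hab, intervalIntegral.integral_of_le hab,
    Real.sqrt_eq_rpow, Real.sqrt_eq_rpow, mul_comm]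
  exact h

theorem intervalIntegrable_of_norm_le_mul_add {f : ℝ → E} {M : ℝ}
    (hf : AEStronglyMeasurable f volume) (hg : AEStronglyMeasurable g volume)
    (hg2 : IntervalIntegrable (fun s => ‖g s‖ ^ 2) volume a b)
    (hfg : ∀ s, ‖f s‖ ≤ M * ‖g s‖ + M) : IntervalIntegrable f volume a b :=
  (((hg2.norm_of_sq hg).const_mul M).add intervalIntegrable_const).mono_fun' hf.restrict
    (ae_of_all _ hfg)

variable [NormedSpace ℝ E]

theorem norm_intervalIntegral_le_of_norm_le_mul_add {f : ℝ → E} {M : ℝ} (hab : a ≤ b)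
    (hM : 0 ≤ M) (hg : AEStronglyMeasurable g volume)
    (hg2 : IntervalIntegrable (fun s => ‖g s‖ ^ 2) volume a b)
    (hfg : ∀ s, ‖f s‖ ≤ M * ‖g s‖ + M) :
    ‖∫ s in a..b, f s‖ ≤ M * (√(b - a) * √(∫ s in a..b, ‖g s‖ ^ 2) + (b - a)) := by
  have hgi := (hg2.norm_of_sq hg).const_mul M
  calc ‖∫ s in a..b, f s‖ ≤ ∫ s in a..b, (M * ‖g s‖ + M) :=
        intervalIntegral.norm_integral_le_of_norm_le hab (ae_of_all _ fun s _ => hfg s)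
          (hgi.add intervalIntegrable_const)
    _ = M * (∫ s in a..b, ‖g s‖) + M * (b - a) := by
        rw [intervalIntegral.integral_add hgi intervalIntegrable_const,
          intervalIntegral.integral_const_mul, intervalIntegral.integral_const, smul_eq_mul]
        ring
    _ ≤ M * (√(b - a) * √(∫ s in a..b, ‖g s‖ ^ 2)) + M * (b - a) := by
        gcongr
        exact intervalIntegral_norm_le_sqrt_mul_sqrt hab hg hg2
    _ = _ := by ring

theorem sub_eq_intervalIntegral_of_eq_add_integral {X f : ℝ → E} {x : E} {T s t : ℝ}
    (hf : IntervalIntegrable f volume 0 T) (hX : ∀ t ∈ Icc 0 T, X t = x + ∫ r in 0..t, f r)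
    (hs : s ∈ Icc 0 T) (ht : t ∈ Icc 0 T) : X t - X s = ∫ r in s..t, f r := by
  have hsub {c : ℝ} (hc : c ∈ Icc 0 T) : uIcc 0 c ⊆ uIcc 0 T :=
    uIcc_subset_uIcc left_mem_uIcc (Icc_subset_uIcc hc)
  rw [hX t ht, hX s hs, add_sub_add_left_eq_sub,
    intervalIntegral.integral_interval_sub_left (hf.mono_set (hsub ht))
      (hf.mono_set (hsub hs))]

end Integrals

section EulerDrift

variable {d m : ℕ} {σ : EuclideanSpace ℝ (Fin d) → Matrix (Fin d) (Fin m) ℝ}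
  {b : EuclideanSpace ℝ (Fin d) → EuclideanSpace ℝ (Fin d)} {n : ℕ}
  {X : ℝ → EuclideanSpace ℝ (Fin d)} {g : ℝ → EuclideanSpace ℝ (Fin m)}

variable (σ b n X g) in
noncomputable def eulerDrift (s : ℝ) : EuclideanSpace ℝ (Fin d) :=
  mulVecE (σ (X (phiN n s))) (g s) + b (X (phiN n s))

theorem measurable_eulerDrift (hg : Measurable g) : Measurable (eulerDrift σ b n X g) :=
  ((measurable_comp_phiN n fun t i j => σ (X t) i j).mulVecE hg).add
    (measurable_comp_phiN n (b ∘ X))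

theorem norm_eulerDrift_le {M : ℝ} (hσ : ∀ z, frobNorm (σ z) ≤ M) (hb : ∀ z, ‖b z‖ ≤ M)
    (s : ℝ) : ‖eulerDrift σ b n X g s‖ ≤ M * ‖g s‖ + M :=
  (norm_add_le _ _).trans <| add_le_add
    ((norm_mulVecE_le _ _).trans (mul_le_mul_of_nonneg_right (hσ _) (norm_nonneg _))) (hb _)

end EulerDrift

theorem euler_step_estimate_general (d m : ℕ)
    (σ : EuclideanSpace ℝ (Fin d) → Matrix (Fin d) (Fin m) ℝ)
    (b : EuclideanSpace ℝ (Fin d) → EuclideanSpace ℝ (Fin d))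
    (M : ℝ) (hσbd : ∀ z, frobNorm (σ z) ≤ M) (hbbd : ∀ z, ‖b z‖ ≤ M)
    (T : ℝ) (x : EuclideanSpace ℝ (Fin d)) (n : ℕ)
    (g : ℝ → EuclideanSpace ℝ (Fin m)) (hgm : Measurable g) (e₀ : ℝ)
    (hgi : IntervalIntegrable (fun s => ‖g s‖ ^ 2) MeasureTheory.volume 0 T)
    (hge : (∫ s in (0:ℝ)..T, ‖g s‖ ^ 2) ≤ e₀)
    (Xn : ℝ → EuclideanSpace ℝ (Fin d))
    (hXeq : ∀ t ∈ Set.Icc (0:ℝ) T,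
      Xn t = x + ∫ s in (0:ℝ)..t,
        (mulVecE (σ (Xn (phiN n s))) (g s) + b (Xn (phiN n s)))) :
    ∀ t ∈ Set.Icc (0:ℝ) T,
      ‖Xn t - Xn (phiN n t)‖ ≤ (2:ℝ) ^ (-(n:ℝ) / 2) * M * (Real.sqrt e₀ + 1) := by
  rintro t ⟨ht0, htT⟩
  have hM : 0 ≤ M := (norm_nonneg _).trans (hbbd x)
  have hfg := norm_eulerDrift_le (n := n) (X := Xn) (g := g) hσbd hbbd
  have hfi : IntervalIntegrable (eulerDrift σ b n Xn g) volume 0 T :=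
    intervalIntegrable_of_norm_le_mul_add (measurable_eulerDrift hgm).aestronglyMeasurable
      hgm.aestronglyMeasurable hgi hfg
  set φ := phiN n t
  have hφ0 : 0 ≤ φ := phiN_nonneg n ht0
  have hφt : φ ≤ t := phiN_le n t
  have hφT : φ ≤ T := hφt.trans htT
  have henergy : √(∫ s in φ..t, ‖g s‖ ^ 2) ≤ √e₀ :=
    Real.sqrt_le_sqrt <| (intervalIntegral.integral_mono_interval hφ0 hφt htT
      (ae_of_all _ fun s => by positivity) hgi).trans hge
  calc ‖Xn t - Xn φ‖ = ‖∫ s in φ..t, eulerDrift σ b n Xn g s‖ := by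
        rw [sub_eq_intervalIntegral_of_eq_add_integral hfi hXeq ⟨hφ0, hφT⟩ ⟨ht0, htT⟩]
    _ ≤ M * (√(t - φ) * √(∫ s in φ..t, ‖g s‖ ^ 2) + (t - φ)) :=
        norm_intervalIntegral_le_of_norm_le_mul_add hφt hM hgm.aestronglyMeasurable
          (hgi.mono_set (uIcc_subset_uIcc (mem_uIcc_of_le hφ0 hφT) (mem_uIcc_of_le ht0 htT)))
          hfg
    _ ≤ M * ((2 : ℝ) ^ (-(n : ℝ) / 2) * √e₀ + (2 : ℝ) ^ (-(n : ℝ) / 2)) := by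
        gcongr
        · exact sqrt_sub_phiN_le n t
        · exact sub_phiN_le_two_rpow n t
    _ = _ := by ring

/-- Euler polygonal approximation estimate: if `σ`, `b` are measurable and bounded
by `M`, the control derivative `g` has energy `∫₀ᵀ |g|² ≤ e₀`, and `Xⁿ` is the Euler
polygonal approximation with step `2⁻ⁿ`, then for every `t ∈ [0, T]`,
`|Xⁿ(t) − Xⁿ(φₙ(t))| ≤ 2^{-n/2}·M·(√e₀ + 1)`. -/
theorem euler_step_estimate (d m : ℕ)
    (σ : EuclideanSpace ℝ (Fin d) → Matrix (Fin d) (Fin m) ℝ)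
    (b : EuclideanSpace ℝ (Fin d) → EuclideanSpace ℝ (Fin d))
    (hσm : Measurable fun z i j => σ z i j) (hbm : Measurable b)
    (M : ℝ) (hσbd : ∀ z, frobNorm (σ z) ≤ M) (hbbd : ∀ z, ‖b z‖ ≤ M)
    (T : ℝ) (hT : 0 < T) (x : EuclideanSpace ℝ (Fin d)) (n : ℕ)
    (g : ℝ → EuclideanSpace ℝ (Fin m)) (hgm : Measurable g) (e₀ : ℝ)
    (hgi : IntervalIntegrable (fun s => ‖g s‖ ^ 2) MeasureTheory.volume 0 T)
    (hge : (∫ s in (0:ℝ)..T, ‖g s‖ ^ 2) ≤ e₀)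
    (Xn : ℝ → EuclideanSpace ℝ (Fin d)) (hXc : ContinuousOn Xn (Set.Icc 0 T))
    (hXeq : ∀ t ∈ Set.Icc (0:ℝ) T,
      Xn t = x + ∫ s in (0:ℝ)..t,
        (mulVecE (σ (Xn (phiN n s))) (g s) + b (Xn (phiN n s)))) :
    ∀ t ∈ Set.Icc (0:ℝ) T,
      ‖Xn t - Xn (phiN n t)‖ ≤ (2:ℝ) ^ (-(n:ℝ) / 2) * M * (Real.sqrt e₀ + 1) :=
  euler_step_estimate_general d m σ b M hσbd hbbd T x n g hgm e₀ hgi hge Xn hXeq
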